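/- The Fokker–Planck filter preserves realizability for scalar moments: if û ∈ ℝ^{N+1} satisfies û = ⟨φ u_ex⟩ for some u_ex : Θ → (u₋, u₊), and if the evolution ∂_λ u = L u with u(0,·) = u_ex obeys the maximum principle (so u(λ,ξ) ∈ (u₋, u₊) for all λ ≥ 0, ξ ∈ Θ), and L φ_i = μ_i φ_i with L self-adjoint, then for every λ ≥ 0 the filtered moment vector F(λ)û with F(λ) = diag(e^{μ_0 λ},...,e^{μ_N λ}) equals ⟨φ u(λ,·)⟩ and hence is realizable by a function with values in (u₋, u₊). -/

import Mathlib

open MeasureTheory Set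

/-! The moments `t ↦ ∫ φᵢ u(t,·) f_Ξ` satisfy the scalar ODE `m' = μᵢ m`: by self-adjointness,
`∫ φᵢ (L u) f_Ξ = ∫ (L φᵢ) u f_Ξ = μᵢ ∫ φᵢ u f_Ξ`. Hence `m(λ) = e^{μᵢ λ} m(0) = (F(λ) û)ᵢ`, so the
filtered moments are those of `u(λ,·)`, which takes values in `(u₋, u₊)` by the maximum
principle. -/

theorem eq_exp_mul_of_hasDerivAt_const_mul {g : ℝ → ℝ} {c : ℝ}
    (hg : ∀ t, HasDerivAt g (c * g t) t) (t : ℝ) : g t = Real.exp (c * t) * g 0 := by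
  have hderiv : ∀ s, HasDerivAt (fun s => Real.exp (-c * s) * g s) 0 s := by
    intro s
    have hexp : HasDerivAt (fun s => Real.exp (-c * s)) (Real.exp (-c * s) * -c) s := by
      simpa using ((hasDerivAt_id s).const_mul (-c)).exp
    exact (hexp.mul (hg s)).congr_deriv (by ring)
  have hconst := is_const_of_deriv_eq_zero (fun s => (hderiv s).differentiableAt)
    (fun s => (hderiv s).deriv) t 0
  simp only [mul_zero, Real.exp_zero, one_mul] at hconst
  rw [← hconst, ← mul_assoc, ← Real.exp_add]
  simp

section SelfAdjoint

variable {α : Type*} [MeasurableSpace α] {ν : Measure α} {w : α → ℝ}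
  {L : (α → ℝ) →ₗ[ℝ] (α → ℝ)} {ψ : α → ℝ} {c : ℝ}

theorem integral_eigenfunction_mul_map_mul
    (hsa : ∀ f g, ∫ x, L f x * g x * w x ∂ν = ∫ x, f x * L g x * w x ∂ν)
    (hψ : L ψ = fun x => c * ψ x) (v : α → ℝ) :
    ∫ x, ψ x * L v x * w x ∂ν = c * ∫ x, ψ x * v x * w x ∂ν := by
  rw [← hsa, hψ, ← integral_const_mul]
  simp only [mul_assoc]

theorem integral_eigenfunction_mul_evolution_mul {u : ℝ → α → ℝ}
    (hsa : ∀ f g, ∫ x, L f x * g x * w x ∂ν = ∫ x, f x * L g x * w x ∂ν)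
    (hψ : L ψ = fun x => c * ψ x)
    (hcomm : ∀ t, HasDerivAt (fun s => ∫ x, ψ x * u s x * w x ∂ν)
      (∫ x, ψ x * L (u t) x * w x ∂ν) t) (t : ℝ) :
    ∫ x, ψ x * u t x * w x ∂ν = Real.exp (c * t) * ∫ x, ψ x * u 0 x * w x ∂ν :=
  eq_exp_mul_of_hasDerivAt_const_mul
    (fun s => integral_eigenfunction_mul_map_mul hsa hψ (u s) ▸ hcomm s) t

end SelfAdjoint

theorem fokker_planck_filter_preserves_realizability_general
    (N : ℕ) (Θ : Set ℝ) (fΞ : ℝ → ℝ)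
    (φ : Fin (N + 1) → ℝ → ℝ) (μs : Fin (N + 1) → ℝ)
    (L : (ℝ → ℝ) →ₗ[ℝ] (ℝ → ℝ))
    -- L is self-adjoint with respect to the weighted inner product ∫_Θ f g f_Ξ
    (hsa : ∀ f g : ℝ → ℝ,
      (∫ ξ in Θ, L f ξ * g ξ * fΞ ξ) = ∫ ξ in Θ, f ξ * L g ξ * fΞ ξ)
    -- φᵢ is an eigenfunction of L with eigenvalue μᵢ
    (heig : ∀ i, L (φ i) = fun ξ => μs i * φ i ξ)
    (ulo uhi : ℝ)
    (uex : ℝ → ℝ)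
    (uhat : Fin (N + 1) → ℝ)
    (hmom : ∀ i, uhat i = ∫ ξ in Θ, φ i ξ * uex ξ * fΞ ξ)
    (u : ℝ → ℝ → ℝ)
    -- u solves ∂_λ u = L u with initial data u_ex
    (hic : ∀ ξ, u 0 ξ = uex ξ)
    -- maximum principle
    (hmax : ∀ l : ℝ, 0 ≤ l → ∀ ξ ∈ Θ, u l ξ ∈ Ioo ulo uhi)
    -- differentiation of the moments commutes with integration
    (hcomm : ∀ (i : Fin (N + 1)) (l : ℝ),
      HasDerivAt (fun t : ℝ => ∫ ξ in Θ, φ i ξ * u t ξ * fΞ ξ)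
        (∫ ξ in Θ, φ i ξ * L (u l) ξ * fΞ ξ) l) :
    ∀ l : ℝ, 0 ≤ l →
      (∀ i, Real.exp (μs i * l) * uhat i = ∫ ξ in Θ, φ i ξ * u l ξ * fΞ ξ) ∧
      ∃ w : ℝ → ℝ, (∀ ξ ∈ Θ, w ξ ∈ Ioo ulo uhi) ∧
        ∀ i, Real.exp (μs i * l) * uhat i = ∫ ξ in Θ, φ i ξ * w ξ * fΞ ξ := by
  intro l hl
  have hfiltered : ∀ i, Real.exp (μs i * l) * uhat i = ∫ ξ in Θ, φ i ξ * u l ξ * fΞ ξ := by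
    intro i
    rw [integral_eigenfunction_mul_evolution_mul hsa (heig i) (hcomm i), hmom i, funext hic]
  exact ⟨hfiltered, u l, hmax l hl, hfiltered⟩

/-- The Fokker–Planck filter `F(λ) = diag(e^{μᵢ λ})` preserves realizability of scalar
moment vectors: the filtered moments are the moments of the evolved solution `u(λ,·)`,
which takes values in `(ulo, uhi)` by the maximum principle. -/
theorem fokker_planck_filter_preserves_realizability
    (N : ℕ) (Θ : Set ℝ) (fΞ : ℝ → ℝ)
    (φ : Fin (N + 1) → ℝ → ℝ) (μs : Fin (N + 1) → ℝ)
    (L : (ℝ → ℝ) →ₗ[ℝ] (ℝ → ℝ))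
    -- L is self-adjoint with respect to the weighted inner product ∫_Θ f g f_Ξ
    (hsa : ∀ f g : ℝ → ℝ,
      (∫ ξ in Θ, L f ξ * g ξ * fΞ ξ) = ∫ ξ in Θ, f ξ * L g ξ * fΞ ξ)
    -- φᵢ is an eigenfunction of L with eigenvalue μᵢ
    (heig : ∀ i, L (φ i) = fun ξ => μs i * φ i ξ)
    (ulo uhi : ℝ)
    (uex : ℝ → ℝ) (huex : ∀ ξ ∈ Θ, uex ξ ∈ Ioo ulo uhi)
    (uhat : Fin (N + 1) → ℝ)
    (hmom : ∀ i, uhat i = ∫ ξ in Θ, φ i ξ * uex ξ * fΞ ξ)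
    (u : ℝ → ℝ → ℝ)
    -- u solves ∂_λ u = L u with initial data u_ex
    (hic : ∀ ξ, u 0 ξ = uex ξ)
    (hpde : ∀ (l : ℝ) (ξ : ℝ), HasDerivAt (fun t : ℝ => u t ξ) (L (u l) ξ) l)
    -- maximum principle
    (hmax : ∀ l : ℝ, 0 ≤ l → ∀ ξ ∈ Θ, u l ξ ∈ Ioo ulo uhi)
    -- differentiation of the moments commutes with integration
    (hcomm : ∀ (i : Fin (N + 1)) (l : ℝ),
      HasDerivAt (fun t : ℝ => ∫ ξ in Θ, φ i ξ * u t ξ * fΞ ξ)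
        (∫ ξ in Θ, φ i ξ * L (u l) ξ * fΞ ξ) l) :
    ∀ l : ℝ, 0 ≤ l →
      (∀ i, Real.exp (μs i * l) * uhat i = ∫ ξ in Θ, φ i ξ * u l ξ * fΞ ξ) ∧
      ∃ w : ℝ → ℝ, (∀ ξ ∈ Θ, w ξ ∈ Ioo ulo uhi) ∧
        ∀ i, Real.exp (μs i * l) * uhat i = ∫ ξ in Θ, φ i ξ * w ξ * fΞ ξ :=
  fokker_planck_filter_preserves_realizability_general N Θ fΞ φ μs L hsa heig ulo uhi uex uhat hmom
    u hic hmax hcomm
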